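/- Mixed associativity of Wiener-Fliess composition and multiplicative mixed composition: for d ∈ ℝ^p[[X̃]] with |X̃| = q, c ∈ ℝ^q⟨⟨X⟩⟩ proper, and e ∈ ℝ^m⟨⟨X⟩⟩, one has d ∘̂ (c ∘̄ δ_e) = (d ∘̂ c) ∘̄ δ_e. -/

import Mathlib

open scoped BigOperators

namespace FPS

/-- A (noncommutative) formal power series over alphabet `X` is a map from words to `ℝ`. -/
abbrev Series (X : Type*) := List X → ℝ

noncomputable section

variable {X : Type*} [DecidableEq X]

/-- The series `1·∅`. -/
def one : Series X := fun η => if η = [] then 1 else 0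

/-- Cauchy (concatenation) product. -/
def cauchy (c d : Series X) : Series X := fun η =>
  ∑ i ∈ Finset.range (η.length + 1), c (η.take i) * d (η.drop i)

/-- Shuffle product. -/
def sh (c d : Series X) : List X → ℝ
  | [] => c [] * d []
  | x :: t => sh (fun w => c (x :: w)) d t + sh c (fun w => d (x :: w)) t

/-- Cauchy powers. -/
def cpow (c : Series X) : ℕ → Series X
  | 0 => one
  | k + 1 => cauchy c (cpow c k)

/-- Shuffle powers. -/
def shpow (c : Series X) : ℕ → Series X
  | 0 => one
  | k + 1 => sh c (shpow c k)

/-- The proper series `1 - s/(s,∅)` entering the inverse formulas (negated proper part of `s/(s,∅)`). -/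
def sprime (s : Series X) : Series X := fun w => if w = [] then 0 else - (s w / s [])

/-- Cauchy inverse `(s,∅)⁻¹ Σ_k (s')^k` of a purely improper series. -/
def cInv (s : Series X) : Series X := fun η =>
  (s [])⁻¹ * ∑ k ∈ Finset.range (η.length + 1), cpow (sprime s) k η

/-- Shuffle inverse `(s,∅)⁻¹ Σ_k (s')^{⧢k}` of a purely improper series. -/
def shInv (s : Series X) : Series X := fun η =>
  (s [])⁻¹ * ∑ k ∈ Finset.range (η.length + 1), shpow (sprime s) k η

/-- The order: minimal length of a word in the support (`⊤` for the zero series). -/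
def ord (c : Series X) : ℕ∞ := sInf ((fun η : List X => (η.length : ℕ∞)) '' {η | c η ≠ 0})

/-- `σ^n` with `σ^⊤ = 0`. -/
def powE (σ : ℝ) : ℕ∞ → ℝ := fun n => if n = ⊤ then 0 else σ ^ n.toNat

/-- The ultrametric `κ(c,d) = σ^{ord(c-d)}`. -/
def kappa (σ : ℝ) (c d : Series X) : ℝ := powE σ (ord (c - d))

/-- Order of a vector of series (minimum over components). -/
def ordV {n : ℕ} (c : Fin n → Series X) : ℕ∞ := ⨅ i, ord (c i)

/-- Ultrametric on vectors of series. -/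
def kappaV (σ : ℝ) {n : ℕ} (c d : Fin n → Series X) : ℝ := powE σ (ordV (c - d))

/-- Proper part `c - (c,∅)∅`. -/
def properPart (c : Series X) : Series X := fun w => if w = [] then 0 else c w

/-- Left concatenation by a letter: `x·s`. -/
def leftc (x : X) (s : Series X) : Series X := fun η =>
  match η with
  | [] => 0
  | y :: t => if y = x then s t else 0

end

noncomputable section

/-- `φ̄_d(η)` : the algebra homomorphism defining the multiplicative mixed composition
product, with `φ̄_d(x_0)(w) = x_0 w` and `φ̄_d(x_i)(w) = x_i (d_i ⧢ w)`. -/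
def phiWord {m : ℕ} (d : Fin m → Series (Fin (m + 1))) :
    List (Fin (m + 1)) → Series (Fin (m + 1)) → Series (Fin (m + 1))
  | [], w => w
  | i :: t, w =>
      Fin.cases (leftc 0 (phiWord d t w)) (fun j => leftc j.succ (sh (d j) (phiWord d t w))) i

/-- Multiplicative mixed composition product `c ∘̄ δ_d = Σ_η (c,η) φ̄_d(η)(1)`. -/
def mix {m : ℕ} (c : Series (Fin (m + 1))) (d : Fin m → Series (Fin (m + 1))) :
    Series (Fin (m + 1)) := fun η =>
  ∑ k ∈ Finset.range (η.length + 1),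
    ∑ v : List.Vector (Fin (m + 1)) k, c v.toList * phiWord d v.toList one η

/-- `ψ_e(η)` : the algebra homomorphism defining the composition product, with
`ψ_e(x'_i)(w) = x_0 (e_i ⧢ w)`, `e_0 = 1∅`. -/
def psiWord {ℓ m : ℕ} (e : Fin ℓ → Series (Fin (m + 1))) :
    List (Fin (ℓ + 1)) → Series (Fin (m + 1)) → Series (Fin (m + 1))
  | [], w => w
  | i :: t, w => leftc 0 (sh (Fin.cases one e i) (psiWord e t w))

/-- Composition product `c ∘ e = Σ_η (c,η) ψ_e(η)(1)`. -/
def comp {ℓ m : ℕ} (c : Series (Fin (ℓ + 1))) (e : Fin ℓ → Series (Fin (m + 1))) :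
    Series (Fin (m + 1)) := fun η =>
  ∑ k ∈ Finset.range (η.length + 1),
    ∑ v : List.Vector (Fin (ℓ + 1)) k, c v.toList * psiWord e v.toList one η

/-- The multiplicative composition product on `δ`-series:
`δ_c ∘ δ_d = δ_{d ⧢ (c ∘̄ δ_d)}`, expressed on the underlying series. -/
def star {m : ℕ} (c d : Fin m → Series (Fin (m + 1))) : Fin m → Series (Fin (m + 1)) :=
  fun i => sh (d i) (mix (c i) d)

/-- The all-ones series vector (generating series of the identity `δ_1`). -/
def oneV {X : Type*} [DecidableEq X] (m : ℕ) : Fin m → Series X := fun _ => one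

open Classical in
/-- The inverse `d^{∘-1}` in the multiplicative dynamic output feedback group: the unique
solution of `e = d^{⧢-1} ∘̄ δ_e`. -/
def dynInv {m : ℕ} (d : Fin m → Series (Fin (m + 1))) : Fin m → Series (Fin (m + 1)) :=
  if h : ∃ e : Fin m → Series (Fin (m + 1)), e = fun i => mix (shInv (d i)) e then h.choose
  else oneV m

/-- Shuffle power of a family: `c^{⧢n} = c_1^{⧢n_1} ⧢ ⋯ ⧢ c_ℓ^{⧢n_ℓ}`. -/
def shFam {X : Type*} [DecidableEq X] {ℓ : ℕ} (c : Fin ℓ → Series X) (n : Fin ℓ →₀ ℕ) :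
    Series X :=
  (List.finRange ℓ).foldr (fun i acc => sh (shpow (c i) (n i)) acc) one

/-- Wiener-Fliess composition product `d ∘̂ c = Σ_{η∈X̃*} (d,η) c^{⧢η}` of a commutative
series `d` with a (proper) noncommutative series vector `c`. -/
def wf {X : Type*} [DecidableEq X] {ℓ : ℕ} (d : MvPowerSeries (Fin ℓ) ℝ)
    (c : Fin ℓ → Series X) : Series X := fun η =>
  ∑ n ∈ Finset.Iic (Finsupp.equivFunOnFinite.symm fun _ : Fin ℓ => η.length),
    MvPowerSeries.coeff n d * shFam c n η

end

/-!
Since `c` is proper, `c^{⧢n}` has order at least `n_j` for every `j`, so on words of length at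
most `N` the Wiener-Fliess product `d ∘̂ c` is the finite sum `Σ_{n ≤ (N,…,N)} (d,n) c^{⧢n}`;
and `(c ∘̄ δ_e, η)` only involves coefficients of `c` at words no longer than `η`. The map
`c ↦ c ∘̄ δ_e` is linear, and the recursion `x_z⁻¹(c ∘̄ δ_e) = e_z ⧢ (x_z⁻¹(c) ∘̄ δ_e)`
(with `e_0 = 1`), together with the Leibniz rule for `x⁻¹` on shuffles, makes it a shuffle
homomorphism by induction on the word length. Hence it commutes with `c ↦ c^{⧢n}`, and both sides
of the identity are the same finite sum.
-/

section Shuffle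

variable {X : Type*}

/-- The left-shift operator `x⁻¹(c)`, adjoint to left concatenation `leftc x`. -/
def leftShift (x : X) (c : Series X) : Series X := fun w => c (x :: w)

lemma leftShift_add (x : X) (a b : Series X) :
    leftShift x (a + b) = leftShift x a + leftShift x b := rfl

lemma leftShift_smul (x : X) (r : ℝ) (a : Series X) :
    leftShift x (r • a) = r • leftShift x a := rfl

lemma sh_nil (a b : Series X) : sh a b [] = a [] * b [] := rfl

lemma sh_cons (a b : Series X) (x : X) (t : List X) :
    sh a b (x :: t) = sh (leftShift x a) b t + sh a (leftShift x b) t := rfl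

lemma leftShift_sh (x : X) (a b : Series X) :
    leftShift x (sh a b) = sh (leftShift x a) b + sh a (leftShift x b) := rfl

lemma sh_comm (a b : Series X) : sh a b = sh b a := by
  funext η
  induction η generalizing a b with
  | nil => exact mul_comm _ _
  | cons x t ih => rw [sh_cons, sh_cons, ih, ih (leftShift x b), add_comm]

lemma sh_add_left (a a' b : Series X) : sh (a + a') b = sh a b + sh a' b := by
  funext η
  induction η generalizing a a' b with
  | nil => exact add_mul _ _ _
  | cons x t ih =>
      simp only [Pi.add_apply, sh_cons, leftShift_add, ih]
      ring

lemma sh_smul_left (r : ℝ) (a b : Series X) : sh (r • a) b = r • sh a b := by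
  funext η
  induction η generalizing a b with
  | nil => exact mul_assoc _ _ _
  | cons x t ih =>
      simp only [Pi.smul_apply, smul_eq_mul, sh_cons, leftShift_smul, ih]
      ring

lemma sh_add_right (a b b' : Series X) : sh a (b + b') = sh a b + sh a b' := by
  rw [sh_comm, sh_add_left, sh_comm b, sh_comm b']

lemma sh_smul_right (r : ℝ) (a b : Series X) : sh a (r • b) = r • sh a b := by
  rw [sh_comm, sh_smul_left, sh_comm b]

def shₗ (a : Series X) : Series X →ₗ[ℝ] Series X where
  toFun := sh a
  map_add' := sh_add_right a
  map_smul' r b := sh_smul_right r a b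

lemma sh_zero_right (a : Series X) : sh a 0 = 0 :=
  map_zero (shₗ a)

lemma sh_sum_right {ι : Type*} (a : Series X) (s : Finset ι) (f : ι → Series X) :
    sh a (∑ i ∈ s, f i) = ∑ i ∈ s, sh a (f i) :=
  map_sum (shₗ a) f s

lemma sh_one_left (b : Series X) : sh one b = b := by
  funext η
  induction η generalizing b with
  | nil => simp [sh_nil, one]
  | cons x t ih =>
      have h0 : leftShift x (one : Series X) = 0 := funext fun w => by simp [leftShift, one]
      have hz : sh (0 : Series X) b = 0 := by rw [sh_comm, sh_zero_right]
      rw [sh_cons, h0, hz, ih, Pi.zero_apply, zero_add]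
      rfl

lemma sh_assoc (a b c : Series X) : sh (sh a b) c = sh a (sh b c) := by
  funext η
  induction η generalizing a b c with
  | nil => exact mul_assoc _ _ _
  | cons x t ih =>
      simp only [sh_cons, leftShift_sh, sh_add_left, sh_add_right, Pi.add_apply, ih, add_assoc]

lemma sh_congr_of_length_le (η : List X) {a a' b b' : Series X}
    (ha : ∀ w : List X, w.length ≤ η.length → a w = a' w)
    (hb : ∀ w : List X, w.length ≤ η.length → b w = b' w) :
    sh a b η = sh a' b' η := by
  induction η generalizing a a' b b' with
  | nil => rw [sh_nil, sh_nil, ha [] le_rfl, hb [] le_rfl]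
  | cons x t ih =>
      rw [sh_cons, sh_cons]
      congr 1
      · exact ih (fun w hw => ha (x :: w) (by simpa using hw)) (fun w hw => hb w (by simp; omega))
      · exact ih (fun w hw => ha w (by simp; omega)) (fun w hw => hb (x :: w) (by simpa using hw))

/-- `p ≤ ord a`, stated pointwise. -/
def OrderGE (a : Series X) (p : ℕ) : Prop := ∀ w : List X, w.length < p → a w = 0

lemma orderGE_zero (a : Series X) : OrderGE a 0 := fun _ hw => absurd hw (Nat.not_lt_zero _)

lemma orderGE_sh {a b : Series X} {p q : ℕ} (ha : OrderGE a p) (hb : OrderGE b q) :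
    OrderGE (sh a b) (p + q) := by
  intro η hη
  induction η generalizing a b p q with
  | nil =>
      rcases Nat.eq_zero_or_pos p with rfl | hp
      · rw [sh_nil, hb [] (by simpa using hη), mul_zero]
      · rw [sh_nil, ha [] hp, zero_mul]
  | cons x t ih =>
      have ha' : OrderGE (leftShift x a) (p - 1) := fun w hw => ha (x :: w) (by simp; omega)
      have hb' : OrderGE (leftShift x b) (q - 1) := fun w hw => hb (x :: w) (by simp; omega)
      simp only [List.length_cons] at hη
      rw [sh_cons, ih ha' hb (by omega), ih ha hb' (by omega), add_zero]

lemma orderGE_shpow {a : Series X} (ha : a [] = 0) (k : ℕ) : OrderGE (shpow a k) k := by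
  induction k with
  | zero => exact orderGE_zero _
  | succ k ih =>
      have ha1 : OrderGE a 1 := fun w hw => by
        rwa [List.eq_nil_of_length_eq_zero (l := w) (by omega)]
      show OrderGE (sh a (shpow a k)) (k + 1)
      rw [add_comm]
      exact orderGE_sh ha1 ih

lemma orderGE_foldr_sh_shpow {ι : Type*} {c : ι → Series X} (hc : ∀ i, c i [] = 0) (n : ι → ℕ)
    {j : ι} {L : List ι} (hj : j ∈ L) :
    OrderGE (L.foldr (fun i acc => sh (shpow (c i) (n i)) acc) one) (n j) := by
  induction L with
  | nil => simp at hj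
  | cons i L ih =>
      by_cases hij : i = j
      · subst hij
        exact orderGE_sh (orderGE_shpow (hc i) (n i)) (orderGE_zero _)
      · have hjL : j ∈ L := (List.mem_cons.mp hj).resolve_left (Ne.symm hij)
        simpa using orderGE_sh (orderGE_zero _) (ih hjL)

lemma orderGE_shFam [DecidableEq X] {ℓ : ℕ} {c : Fin ℓ → Series X} (hc : ∀ i, c i [] = 0)
    (n : Fin ℓ →₀ ℕ) (j : Fin ℓ) : OrderGE (shFam c n) (n j) :=
  orderGE_foldr_sh_shpow hc n (List.mem_finRange j)

end Shuffle

lemma sum_vector_succ {α β : Type*} [Fintype α] [AddCommMonoid β] (k : ℕ)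
    (f : List.Vector α (k + 1) → β) :
    ∑ v, f v = ∑ x : α, ∑ v : List.Vector α k, f (x ::ᵥ v) := by
  rw [← Fintype.sum_prod_type']
  exact Fintype.sum_equiv
    ⟨fun v => (v.head, v.tail), fun p => p.1 ::ᵥ p.2, fun v => by simp, fun p => by simp⟩
    _ _ (fun v => by simp)

section MixedComposition

variable {m : ℕ} (e : Fin m → Series (Fin (m + 1)))

/-- `e_0 := 1`, so that `φ̄_e(x_i)(w) = x_i (e_i ⧢ w)` holds for every letter, `x_0` included. -/
def letterSeries (i : Fin (m + 1)) : Series (Fin (m + 1)) := Fin.cases one e i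

lemma phiWord_cons (i : Fin (m + 1)) (v : List (Fin (m + 1))) (w : Series (Fin (m + 1))) :
    phiWord e (i :: v) w = leftc i (sh (letterSeries e i) (phiWord e v w)) := by
  cases i using Fin.cases with
  | zero => simp [phiWord, letterSeries, sh_one_left]
  | succ j => rfl

lemma phiWord_cons_apply_nil (i : Fin (m + 1)) (v : List (Fin (m + 1)))
    (w : Series (Fin (m + 1))) : phiWord e (i :: v) w [] = 0 := by
  rw [phiWord_cons]; rfl

lemma phiWord_cons_apply_cons (i : Fin (m + 1)) (v : List (Fin (m + 1)))
    (w : Series (Fin (m + 1))) (z : Fin (m + 1)) (t : List (Fin (m + 1))) :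
    phiWord e (i :: v) w (z :: t) =
      if z = i then sh (letterSeries e i) (phiWord e v w) t else 0 := by
  rw [phiWord_cons]; rfl

lemma orderGE_phiWord (v : List (Fin (m + 1))) : OrderGE (phiWord e v one) v.length := by
  induction v with
  | nil => exact orderGE_zero _
  | cons i v ih =>
      rintro (_ | ⟨z, t⟩) hη
      · exact phiWord_cons_apply_nil e i v one
      · rw [phiWord_cons_apply_cons]
        split_ifs
        · exact orderGE_sh (orderGE_zero _) ih t (by simpa using hη)
        · rfl

lemma mix_apply_eq_sum_range (c : Series (Fin (m + 1))) {N : ℕ} {η : List (Fin (m + 1))}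
    (hη : η.length < N) :
    mix c e η = ∑ k ∈ Finset.range N, ∑ v : List.Vector (Fin (m + 1)) k,
      c v.toList * phiWord e v.toList one η := by
  refine Finset.sum_subset (Finset.range_subset_range.mpr hη) fun k hk hk' => ?_
  refine Finset.sum_eq_zero fun v _ => ?_
  simp only [Finset.mem_range, not_lt] at hk hk'
  rw [orderGE_phiWord e v.toList η (by rw [v.toList_length]; omega), mul_zero]

lemma mix_congr_of_length_le {a a' : Series (Fin (m + 1))} (η : List (Fin (m + 1)))
    (h : ∀ w : List (Fin (m + 1)), w.length ≤ η.length → a w = a' w) :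
    mix a e η = mix a' e η := by
  refine Finset.sum_congr rfl fun k hk => Finset.sum_congr rfl fun v _ => ?_
  rw [h v.toList (by rw [v.toList_length]; simpa [Nat.lt_succ_iff] using hk)]

lemma mix_nil (c : Series (Fin (m + 1))) : mix c e [] = c [] := by
  simp [mix, Fintype.sum_subsingleton _ List.Vector.nil, phiWord, one]

lemma mix_cons (c : Series (Fin (m + 1))) (z : Fin (m + 1)) (t : List (Fin (m + 1))) :
    mix c e (z :: t) = sh (letterSeries e z) (mix (leftShift z c) e) t := by
  set φ : ℕ → Series (Fin (m + 1)) := fun k => ∑ v : List.Vector (Fin (m + 1)) k,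
    leftShift z c v.toList • phiWord e v.toList one
  have hempty : ∑ v : List.Vector (Fin (m + 1)) 0,
      c v.toList * phiWord e v.toList one (z :: t) = 0 := by
    simp [Fintype.sum_subsingleton _ List.Vector.nil, phiWord, one]
  -- only words starting with the letter `z` contribute
  have hfirst : ∀ k, ∑ v : List.Vector (Fin (m + 1)) (k + 1),
      c v.toList * phiWord e v.toList one (z :: t) = sh (letterSeries e z) (φ k) t := by
    intro k
    simp only [φ, sum_vector_succ, List.Vector.toList_cons, phiWord_cons_apply_cons, mul_ite,
      mul_zero, sh_sum_right, sh_smul_right, Finset.sum_apply, Pi.smul_apply, smul_eq_mul]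
    rw [Fintype.sum_eq_single z fun x hx => by simp [Ne.symm hx]]
    simp only [if_true, leftShift]
  have htrunc : ∀ w : List (Fin (m + 1)), w.length ≤ t.length →
      mix (leftShift z c) e w = (∑ k ∈ Finset.range (t.length + 1), φ k) w := by
    intro w hw
    simp [mix_apply_eq_sum_range e _ (Nat.lt_succ_of_le hw), φ, Finset.sum_apply]
  rw [sh_congr_of_length_le t (fun _ _ => rfl) htrunc, sh_sum_right, Finset.sum_apply]
  change ∑ k ∈ Finset.range (t.length + 2), _ = _
  rw [Finset.sum_range_succ', hempty, add_zero]
  exact Finset.sum_congr rfl fun k _ => hfirst k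

def mixₗ : Series (Fin (m + 1)) →ₗ[ℝ] Series (Fin (m + 1)) where
  toFun c := mix c e
  map_add' a b := by
    funext η
    simp [mix, add_mul, Finset.sum_add_distrib]
  map_smul' r a := by
    funext η
    simp [mix, Finset.mul_sum, mul_assoc]

lemma mixₗ_apply (c : Series (Fin (m + 1))) : mixₗ e c = mix c e := rfl

lemma leftShift_mix (c : Series (Fin (m + 1))) (z : Fin (m + 1)) :
    leftShift z (mix c e) = sh (letterSeries e z) (mix (leftShift z c) e) :=
  funext (mix_cons e c z)

lemma mix_sh (a b : Series (Fin (m + 1))) : mix (sh a b) e = sh (mix a e) (mix b e) := by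
  suffices h : ∀ (n : ℕ) (η : List (Fin (m + 1))), η.length ≤ n → ∀ a b : Series (Fin (m + 1)),
      mix (sh a b) e η = sh (mix a e) (mix b e) η from funext fun η => h _ η le_rfl a b
  intro n
  induction n with
  | zero =>
      rintro (_ | ⟨z, t⟩) hη a b
      · simp only [mix_nil, sh_nil]
      · simp at hη
  | succ n ih =>
      rintro (_ | ⟨z, t⟩) hη a b
      · simp only [mix_nil, sh_nil]
      have ht : t.length ≤ n := by simpa using hη
      set E := letterSeries e z
      calc mix (sh a b) e (z :: t)
          = sh E (mix (sh (leftShift z a) b) e + mix (sh a (leftShift z b)) e) t := by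
            rw [mix_cons, leftShift_sh, ← mixₗ_apply, map_add, mixₗ_apply, mixₗ_apply]
        _ = sh E (sh (mix (leftShift z a) e) (mix b e)
              + sh (mix a e) (mix (leftShift z b) e)) t :=
            sh_congr_of_length_le t (fun _ _ => rfl) fun w hw => by
              simp only [Pi.add_apply, ih w (hw.trans ht)]
        _ = sh (sh E (mix (leftShift z a) e)) (mix b e) t
              + sh (mix a e) (sh E (mix (leftShift z b) e)) t := by
            rw [sh_add_right, Pi.add_apply, ← sh_assoc E, ← sh_assoc E (mix a e),
              sh_comm E (mix a e), sh_assoc (mix a e)]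
        _ = sh (mix a e) (mix b e) (z :: t) := by
            rw [sh_cons, leftShift_mix, leftShift_mix]

lemma mix_one : mix one e = one := by
  funext η
  rcases η with _ | ⟨z, t⟩
  · exact mix_nil e one
  · have h0 : leftShift z (one : Series (Fin (m + 1))) = 0 :=
      funext fun w => by simp [leftShift, one]
    rw [mix_cons, h0, ← mixₗ_apply, map_zero, sh_zero_right]
    rfl

lemma mix_shpow (a : Series (Fin (m + 1))) (k : ℕ) : mix (shpow a k) e = shpow (mix a e) k := by
  induction k with
  | zero => exact mix_one e
  | succ k ih => exact (mix_sh e a _).trans (congrArg _ ih)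

lemma mix_shFam {ℓ : ℕ} (c : Fin ℓ → Series (Fin (m + 1))) (n : Fin ℓ →₀ ℕ) :
    mix (shFam c n) e = shFam (fun j => mix (c j) e) n := by
  unfold shFam
  induction List.finRange ℓ with
  | nil => exact mix_one e
  | cons i L ih => simp only [List.foldr_cons, mix_sh, mix_shpow, ih]

end MixedComposition

lemma wf_apply_eq_sum_Iic {X : Type*} [DecidableEq X] {ℓ : ℕ} (d : MvPowerSeries (Fin ℓ) ℝ)
    {c : Fin ℓ → Series X} (hc : ∀ i, c i [] = 0) {N : ℕ} {w : List X} (hw : w.length ≤ N) :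
    wf d c w = ∑ n ∈ Finset.Iic (Finsupp.equivFunOnFinite.symm fun _ : Fin ℓ => N),
      MvPowerSeries.coeff n d * shFam c n w := by
  refine Finset.sum_subset (Finset.Iic_subset_Iic.mpr fun _ => hw) fun n _ hn => ?_
  obtain ⟨j, hj⟩ : ∃ j, w.length < n j := by
    by_contra! h
    exact hn (Finset.mem_Iic.mpr h)
  rw [orderGE_shFam hc n j w hj, mul_zero]

/-- Mixed associativity of the Wiener-Fliess composition product and the
multiplicative mixed composition product: `d ∘̂ (c ∘̄ δ_e) = (d ∘̂ c) ∘̄ δ_e`. -/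
theorem wf_mix_assoc (p q m : ℕ) (d : Fin p → MvPowerSeries (Fin q) ℝ)
    (c : Fin q → Series (Fin (m + 1))) (hc : ∀ i, c i [] = 0)
    (e : Fin m → Series (Fin (m + 1))) :
    ∀ i : Fin p, wf (d i) (fun j => mix (c j) e) = mix (wf (d i) c) e := by
  intro i
  funext η
  set N : Fin q →₀ ℕ := Finsupp.equivFunOnFinite.symm fun _ => η.length
  calc wf (d i) (fun j => mix (c j) e) η
      = ∑ n ∈ Finset.Iic N, MvPowerSeries.coeff n (d i) * mix (shFam c n) e η := by
        simp only [wf, mix_shFam]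
        rfl
    _ = mixₗ e (∑ n ∈ Finset.Iic N, MvPowerSeries.coeff n (d i) • shFam c n) η := by
        simp [map_sum, map_smul, Finset.sum_apply, mixₗ_apply]
    _ = mix (wf (d i) c) e η :=
        mix_congr_of_length_le e η fun w hw => by
          simpa [Finset.sum_apply] using (wf_apply_eq_sum_Iic (d i) hc hw).symm

end FPS
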